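/- arXiv:1811.09763 — 2 statements merged into one kernel-verified Lean document; each statement's English description precedes it below -/
import Mathlib

section
/- Among all ranked lists of length K with exactly m relevant items (1 ≤ m ≤ K), average precision is minimized when the relevant items occupy the last m positions, and then AP = (1/m) Σ_{t=1}^{m} t/(K - m + t). -/
/-!
List the relevant positions as `p₀ < ⋯ < p_{m-1}` (`Finset.orderEmbOfFin`). Then
`P@p_s = (s+1)/p_s`, and since the `m - 1 - s` relevant positions after `p_s` fit into the
`K - p_s` later slots, `p_s ≤ K - m + (s + 1)`. Comparing term by term gives the lower bound,
with equality when the relevant items fill the last `m` slots.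
-/

noncomputable def prec (a : ℕ → ℕ) (i : ℕ) : ℚ :=
  (∑ j ∈ Finset.Icc 1 i, (a j : ℚ)) / i

noncomputable def AP (a : ℕ → ℕ) (K : ℕ) : ℚ :=
  (∑ i ∈ Finset.Icc 1 K, (a i : ℚ) * prec a i) / (∑ i ∈ Finset.Icc 1 K, (a i : ℚ))

open Finset

namespace Finset

section LinearOrder

variable {α : Type*} [LinearOrder α] {s : Finset α} {k : ℕ}

theorem card_filter_le_orderEmbOfFin (h : #s = k) (i : Fin k) :
    #{x ∈ s | x ≤ s.orderEmbOfFin h i} = i + 1 := by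
  set f := s.orderEmbOfFin h
  rw [← s.map_orderEmbOfFin_univ h, filter_map, card_map]
  simp only [Function.comp_def, RelEmbedding.coe_toEmbedding, f, OrderEmbedding.le_iff_le,
    filter_ge_eq_Iic, Fin.card_Iic]

theorem card_filter_orderEmbOfFin_lt (h : #s = k) (i : Fin k) :
    #{x ∈ s | s.orderEmbOfFin h i < x} = k - 1 - i := by
  set f := s.orderEmbOfFin h
  rw [← s.map_orderEmbOfFin_univ h, filter_map, card_map]
  simp only [Function.comp_def, RelEmbedding.coe_toEmbedding, f, OrderEmbedding.lt_iff_lt,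
    filter_lt_eq_Ioi, Fin.card_Ioi]

theorem sum_orderEmbOfFin {β : Type*} [AddCommMonoid β] (h : #s = k) (g : α → β) :
    ∑ i, g (s.orderEmbOfFin h i) = ∑ x ∈ s, g x := by
  conv_rhs => rw [← s.map_orderEmbOfFin_univ h]
  rw [sum_map]
  rfl

end LinearOrder

variable {s : Finset ℕ} {k : ℕ}

theorem orderEmbOfFin_le_sub_add {K : ℕ} (h : #s = k) (hs : ∀ x ∈ s, x ≤ K) (i : Fin k) :
    s.orderEmbOfFin h i ≤ K - k + (i + 1) := by
  set p := s.orderEmbOfFin h i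
  have hlater : #{x ∈ s | p < x} ≤ #(Ioc p K) :=
    card_le_card fun x hx => by
      rw [mem_filter] at hx
      exact mem_Ioc.mpr ⟨hx.2, hs x hx.1⟩
  rw [card_filter_orderEmbOfFin_lt, Nat.card_Ioc] at hlater
  have := hs p (s.orderEmbOfFin_mem h i)
  omega

theorem orderEmbOfFin_eq_add {c : ℕ} (h : #s = k) (hs : ∀ i : Fin k, c + (i + 1) ∈ s)
    (i : Fin k) : s.orderEmbOfFin h i = c + (i + 1) :=
  (congrFun (orderEmbOfFin_unique h hs fun i j hij => by simpa using hij) i).symm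

theorem sum_Icc_one_eq_sum_fin {β : Type*} [AddCommMonoid β] (n : ℕ) (g : ℕ → β) :
    ∑ t ∈ Icc 1 n, g t = ∑ s : Fin n, g (s + 1) := by
  rw [Fin.sum_univ_eq_sum_range (fun s => g (s + 1)), range_eq_Ico, sum_Ico_add']
  rfl

end Finset

theorem Nat.cast_eq_ite_of_le_one {R : Type*} [AddMonoidWithOne R] {n : ℕ} (h : n ≤ 1) :
    (n : R) = if n = 1 then 1 else 0 := by
  rcases Nat.le_one_iff_eq_zero_or_eq_one.mp h with rfl | rfl <;> simp

section BinaryRelevance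

variable {a : ℕ → ℕ} {K m : ℕ}

def relevantPositions (a : ℕ → ℕ) (K : ℕ) : Finset ℕ := {i ∈ Icc 1 K | a i = 1}

theorem mem_relevantPositions {i : ℕ} :
    i ∈ relevantPositions a K ↔ (1 ≤ i ∧ i ≤ K) ∧ a i = 1 := by
  rw [relevantPositions, mem_filter, mem_Icc]

theorem sum_cast_eq_card_filter (hbin : ∀ i, a i ≤ 1) (s : Finset ℕ) :
    ∑ j ∈ s, (a j : ℚ) = #{j ∈ s | a j = 1} := by
  simp_rw [Nat.cast_eq_ite_of_le_one (hbin _), sum_boole]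

theorem card_relevantPositions (hbin : ∀ i, a i ≤ 1) :
    #(relevantPositions a K) = ∑ i ∈ Icc 1 K, a i := by
  exact_mod_cast (sum_cast_eq_card_filter hbin (Icc 1 K)).symm

theorem prec_orderEmbOfFin_relevantPositions (hbin : ∀ i, a i ≤ 1)
    (hT : #(relevantPositions a K) = m) (s : Fin m) :
    prec a ((relevantPositions a K).orderEmbOfFin hT s)
      = ((s + 1 : ℕ) : ℚ) / ((relevantPositions a K).orderEmbOfFin hT s : ℕ) := by
  set p := (relevantPositions a K).orderEmbOfFin hT
  have hpK : p s ≤ K := (mem_relevantPositions.mp (orderEmbOfFin_mem _ hT s)).1.2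
  have hprefix : {j ∈ Icc 1 (p s) | a j = 1} = {x ∈ relevantPositions a K | x ≤ p s} := by
    ext x
    simp only [mem_filter, mem_relevantPositions, mem_Icc]
    omega
  rw [prec, sum_cast_eq_card_filter hbin, hprefix, card_filter_le_orderEmbOfFin]

theorem AP_eq_mean_orderEmbOfFin_relevantPositions (hbin : ∀ i, a i ≤ 1)
    (hT : #(relevantPositions a K) = m) :
    AP a K = 1 / (m : ℚ) * ∑ s : Fin m,
      ((s + 1 : ℕ) : ℚ) / ((relevantPositions a K).orderEmbOfFin hT s : ℕ) := by
  have hnum :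
      ∑ i ∈ Icc 1 K, (a i : ℚ) * prec a i = ∑ i ∈ relevantPositions a K, prec a i := by
    simp_rw [relevantPositions, sum_filter, Nat.cast_eq_ite_of_le_one (hbin _), ite_mul,
      one_mul, zero_mul]
  rw [AP, hnum, sum_cast_eq_card_filter hbin, ← relevantPositions, hT,
    ← sum_orderEmbOfFin hT, one_div_mul_eq_div]
  simp_rw [prec_orderEmbOfFin_relevantPositions hbin hT]

end BinaryRelevance

theorem stmt8_general (K m : ℕ) (a : ℕ → ℕ) (hbin : ∀ i, a i ≤ 1)
    (hm : ∑ i ∈ Finset.Icc 1 K, a i = m) (hmK : m ≤ K) :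
    (1 / (m : ℚ)) * ∑ t ∈ Finset.Icc 1 m, (t : ℚ) / ((K - m + t : ℕ) : ℚ) ≤ AP a K ∧
    ((∀ i ∈ Finset.Icc 1 K, (a i = 1 ↔ K - m < i)) →
      AP a K = (1 / (m : ℚ)) * ∑ t ∈ Finset.Icc 1 m, (t : ℚ) / ((K - m + t : ℕ) : ℚ)) := by
  have hT : #(relevantPositions a K) = m := (card_relevantPositions hbin).trans hm
  rw [AP_eq_mean_orderEmbOfFin_relevantPositions hbin hT, sum_Icc_one_eq_sum_fin]
  set p := (relevantPositions a K).orderEmbOfFin hT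
  have hp_pos : ∀ s, 1 ≤ p s :=
    fun s => (mem_relevantPositions.mp (orderEmbOfFin_mem _ hT s)).1.1
  refine ⟨?_, fun hlast => ?_⟩
  · gcongr with s
    · exact_mod_cast hp_pos s
    · exact orderEmbOfFin_le_sub_add hT (fun _ hx => (mem_relevantPositions.mp hx).1.2) s
  · have hp : ∀ s, p s = K - m + (s + 1) := orderEmbOfFin_eq_add hT fun s => by
      have hmem : K - m + (s + 1) ∈ Icc 1 K := mem_Icc.mpr ⟨by omega, by omega⟩
      exact mem_filter.mpr ⟨hmem, (hlast _ hmem).mpr (by omega)⟩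
    simp_rw [hp]

theorem stmt8 (K m : ℕ) (a : ℕ → ℕ) (hbin : ∀ i, a i ≤ 1)
    (hm : ∑ i ∈ Finset.Icc 1 K, a i = m) (hm1 : 1 ≤ m) (hmK : m ≤ K) :
    (1 / (m : ℚ)) * ∑ t ∈ Finset.Icc 1 m, (t : ℚ) / ((K - m + t : ℕ) : ℚ) ≤ AP a K ∧
    ((∀ i ∈ Finset.Icc 1 K, (a i = 1 ↔ K - m < i)) →
      AP a K = (1 / (m : ℚ)) * ∑ t ∈ Finset.Icc 1 m, (t : ℚ) / ((K - m + t : ℕ) : ℚ)) :=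
  stmt8_general K m a hbin hm hmK
end

section
/- Swapping a relevant item at position i with an adjacent non-relevant item at position i+1 (moving the relevant item down) strictly decreases average precision. -/
/-!
Swapping positions `i` and `i + 1` leaves every prefix count `∑_{t ≤ j} a t` with `j ≠ i`
unchanged, so the total count and every precision other than `P@i` stay the same. Reindexing the
numerator of the swapped list by the swap, the relevant item at `i` is now credited with
`P@(i+1) = S/(i+1)` instead of `P@i = S/i` (where `S` is the prefix count up to `i`, positive
because `a i > 0`), while the remaining terms agree (the one at `i + 1` is `0` on both sides).
-/

open Finset Equiv

lemma sum_Icc_comp_swap_succ {M : Type*} [AddCommMonoid M] {i j : ℕ} (hi : 1 ≤ i) (hj : j ≠ i)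
    (f : ℕ → M) : ∑ t ∈ Icc 1 j, f (swap i (i + 1) t) = ∑ t ∈ Icc 1 j, f t :=
  sum_equiv (swap i (i + 1))
    (fun t => by simp only [mem_Icc, swap_apply_def]; split_ifs <;> omega) (fun _ _ => rfl)

lemma prec_comp_swap_succ {a : ℕ → ℕ} {i j : ℕ} (hi : 1 ≤ i) (hj : j ≠ i) :
    prec (a ∘ swap i (i + 1)) j = prec a j := by
  simp only [prec, Function.comp_apply, sum_Icc_comp_swap_succ hi hj fun t => (a t : ℚ)]

lemma prec_succ_lt_of_eq_zero {a : ℕ → ℕ} {i : ℕ} (ha : a (i + 1) = 0)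
    (hpos : 0 < ∑ t ∈ Icc 1 i, (a t : ℚ)) : prec a (i + 1) < prec a i := by
  have hi : i ≠ 0 := by rintro rfl; simp at hpos
  rw [prec, prec, sum_Icc_succ_top (by omega), ha, Nat.cast_zero, add_zero]
  exact div_lt_div_of_pos_left hpos (by positivity) (by push_cast; linarith)

theorem AP_comp_swap_succ_lt {a : ℕ → ℕ} {i K : ℕ} (hi : 1 ≤ i) (hiK : i < K) (hai : 0 < a i)
    (hai1 : a (i + 1) = 0) : AP (a ∘ swap i (i + 1)) K < AP a K := by
  set σ := swap i (i + 1)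
  have hmem : i ∈ Icc 1 K := mem_Icc.2 ⟨hi, hiK.le⟩
  have hcount : ∑ t ∈ Icc 1 K, ((a ∘ σ) t : ℚ) = ∑ t ∈ Icc 1 K, (a t : ℚ) :=
    sum_Icc_comp_swap_succ hi hiK.ne' fun t => (a t : ℚ)
  have hcount_pos : 0 < ∑ t ∈ Icc 1 K, (a t : ℚ) :=
    lt_of_lt_of_le (by exact_mod_cast hai) (single_le_sum (fun t _ => by positivity) hmem)
  have hprefix_pos : 0 < ∑ t ∈ Icc 1 i, (a t : ℚ) :=
    lt_of_lt_of_le (by exact_mod_cast hai) (single_le_sum (f := fun t => (a t : ℚ))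
      (fun t _ => by positivity) (mem_Icc.2 ⟨hi, le_rfl⟩))
  have hreindex : ∑ t ∈ Icc 1 K, ((a ∘ σ) t : ℚ) * prec (a ∘ σ) t
      = ∑ t ∈ Icc 1 K, (a t : ℚ) * prec (a ∘ σ) (σ t) := by
    simpa [σ, swap_apply_self] using
      sum_Icc_comp_swap_succ hi hiK.ne' fun t => (a t : ℚ) * prec (a ∘ σ) (σ t)
  have hterm_i : (a i : ℚ) * prec (a ∘ σ) (σ i) < (a i : ℚ) * prec a i := by
    rw [swap_apply_left, prec_comp_swap_succ hi (by omega)]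
    exact mul_lt_mul_of_pos_left (prec_succ_lt_of_eq_zero hai1 hprefix_pos) (by exact_mod_cast hai)
  have hterm : ∀ t ∈ Icc 1 K, (a t : ℚ) * prec (a ∘ σ) (σ t) ≤ (a t : ℚ) * prec a t := by
    intro t _
    by_cases hti : t = i
    · exact hti ▸ hterm_i.le
    by_cases hti1 : t = i + 1
    · simp [hti1, hai1]
    · rw [swap_apply_of_ne_of_ne hti hti1, prec_comp_swap_succ hi hti]
  unfold AP
  rw [hcount, hreindex]
  exact div_lt_div_of_pos_right (sum_lt_sum hterm ⟨i, hmem, hterm_i⟩) hcount_pos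

lemma update_update_eq_comp_swap {a : ℕ → ℕ} {i : ℕ} (hai : a i = 1) (hai1 : a (i + 1) = 0) :
    Function.update (Function.update a i 0) (i + 1) 1 = a ∘ swap i (i + 1) := by
  funext t
  simp only [Function.update_apply, Function.comp_apply, swap_apply_def]
  split_ifs <;> simp_all

theorem stmt9_general (K i : ℕ) (a : ℕ → ℕ)
    (hi1 : 1 ≤ i) (hiK : i < K) (hai : a i = 1) (hai1 : a (i + 1) = 0) :
    AP (Function.update (Function.update a i 0) (i + 1) 1) K < AP a K := by
  rw [update_update_eq_comp_swap hai hai1]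
  exact AP_comp_swap_succ_lt hi1 hiK (by omega) hai1

theorem stmt9 (K i : ℕ) (a : ℕ → ℕ) (hbin : ∀ j, a j ≤ 1)
    (hi1 : 1 ≤ i) (hiK : i < K) (hai : a i = 1) (hai1 : a (i + 1) = 0) :
    AP (Function.update (Function.update a i 0) (i + 1) 1) K < AP a K :=
  stmt9_general K i a hi1 hiK hai hai1
end
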